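/- For any symmetric polynomial F in n variables, the coefficient of a permutation σ in F(J_1,...,J_n) ∈ Z[S_n] depends only on the cycle-type of σ; i.e., conjugate permutations have equal coefficients. -/

import Mathlib

/-!
The coefficients of `∏ₗ (X + Jₗ)` are the elementary symmetric polynomials in the pairwise
commuting elements `Jₗ`, and a symmetric `F` is a polynomial in those, so `F(J)` commutes with
every permutation commuting with `∏ₗ (X + Jₗ)`. An adjacent transposition `s = (i i+1)` commutes
with `Jₗ` for `l ≠ i, i+1`, while `s Jᵢ = Jᵢ₊₁ s - 1` and `s Jᵢ₊₁ = Jᵢ s + 1`; hence it commutes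
with `Jᵢ + Jᵢ₊₁` and `Jᵢ Jᵢ₊₁`, that is, with `(X + Jᵢ)(X + Jᵢ₊₁)`. So `F(J)` is central, and a
central element of a group algebra has conjugation-invariant coefficients.
-/

open Finset
open scoped Classical

/-- The Jucys-Murphy element `J_i = Σ_{j<i} (j i)` in the group algebra `ℤ[S_n]`. -/
noncomputable def JM (n : ℕ) (i : Fin n) : MonoidAlgebra ℤ (Equiv.Perm (Fin n)) :=
  ∑ j ∈ Finset.univ.filter (fun j : Fin n => j < i),
    MonoidAlgebra.of ℤ (Equiv.Perm (Fin n)) (Equiv.swap j i)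

/-- Evaluation of a multivariate polynomial at a family of elements of a
(possibly noncommutative) ring, multiplying the variables in increasing order. -/
noncomputable def mvEval {n : ℕ} {A : Type*} [Ring A]
    (F : MvPolynomial (Fin n) ℤ) (g : Fin n → A) : A :=
  (AddMonoidAlgebra.coeff F).sum (fun d a => a • ((List.finRange n).map (fun i => g i ^ d i)).prod)

/-- The coefficient of a group element in an element of the group algebra. -/
noncomputable def coeffOf {G : Type*} (x : MonoidAlgebra ℤ G) (g : G) : ℤ :=
  x.coeff g

section mvEval

open MvPolynomial

variable {n : ℕ} {A B : Type*} [Ring A] [Ring B]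

lemma map_mvEval (φ : A →+* B) (F : MvPolynomial (Fin n) ℤ) (x : Fin n → A) :
    φ (mvEval F x) = mvEval F (fun i => φ (x i)) := by
  simp only [mvEval, Finsupp.sum, map_sum, map_zsmul, map_list_prod, List.map_map,
    Function.comp_def, map_pow]

lemma Commute.mvEval_right {a : A} {x : Fin n → A} (h : ∀ i, Commute a (x i))
    (F : MvPolynomial (Fin n) ℤ) : Commute a (mvEval F x) := by
  refine Commute.sum_right _ _ _ fun d _ => Commute.smul_right (Commute.list_prod_right _ _ ?_) _
  simp only [List.mem_map]
  rintro _ ⟨i, _, rfl⟩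
  exact (h i).pow_right _

lemma mvEval_X (F : MvPolynomial (Fin n) ℤ) : mvEval F X = F := by
  conv_rhs => rw [F.as_sum]
  refine Finset.sum_congr rfl fun d _ => ?_
  dsimp only
  rw [monomial_eq, Finsupp.prod_fintype _ _ (by simp), Fin.prod_univ_def, smul_eq_C_mul]
  rfl

lemma RingHom.eq_mvEval (θ : MvPolynomial (Fin n) ℤ →+* A) (F : MvPolynomial (Fin n) ℤ) :
    θ F = mvEval F (fun i => θ (X i)) := by
  rw [← map_mvEval, mvEval_X]

open scoped IsMulCommutative in
lemma exists_ringHom_X_eq_of_commute (x : Fin n → A) (hx : ∀ i j, Commute (x i) (x j)) :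
    ∃ θ : MvPolynomial (Fin n) ℤ →+* A, ∀ i, θ (X i) = x i := by
  let S := Algebra.adjoin ℤ (Set.range x)
  have : IsMulCommutative S := Algebra.isMulCommutative_adjoin ℤ <| by
    rintro _ ⟨i, rfl⟩ _ ⟨j, rfl⟩
    exact hx i j
  exact ⟨S.val.toRingHom.comp
    (aeval fun i => (⟨x i, Algebra.subset_adjoin ⟨i, rfl⟩⟩ : S)).toRingHom, fun i => by simp⟩

end mvEval

section symmetric

open MvPolynomial

variable {n : ℕ} {A : Type*} [Ring A]

lemma Commute.ringHom_apply_of_isSymmetric {a : A} (θ : MvPolynomial (Fin n) ℤ →+* A)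
    {F : MvPolynomial (Fin n) ℤ} (hF : F.IsSymmetric)
    (h : ∀ i : Fin n, Commute a (θ (esymm (Fin n) ℤ (i + 1)))) : Commute a (θ F) := by
  obtain ⟨P, hP⟩ := esymmAlgHom_fin_surjective ℤ le_rfl ⟨F, hF⟩
  have hF' : F = aeval (fun i : Fin n => esymm (Fin n) ℤ (i + 1)) P := by
    rw [← esymmAlgHom_apply, hP]
  rw [hF', ← AlgHom.coe_toRingHom, ← RingHom.comp_apply, RingHom.eq_mvEval]
  exact Commute.mvEval_right (fun i => by simpa using h i) P

end symmetric

open Polynomial in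
lemma coeff_prod_ofFn_X_add_C {R A : Type*} [CommSemiring R] [Semiring A] {n : ℕ}
    (θ : MvPolynomial (Fin n) R →+* A) {k : ℕ} (hk : k ≤ n) :
    (List.ofFn fun i => X + C (θ (MvPolynomial.X i))).prod.coeff k =
      θ (MvPolynomial.esymm (Fin n) R (n - k)) := by
  have hmap : (List.ofFn fun i => X + C (θ (MvPolynomial.X i))) =
      (List.ofFn fun i => X + C (MvPolynomial.X i)).map (Polynomial.mapRingHom θ) := by
    simp [List.map_ofFn, Function.comp_def]
  rw [hmap, ← map_list_prod, coe_mapRingHom, coeff_map, List.prod_ofFn,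
    MvPolynomial.prod_X_add_C_coeff R (Fin n) k (by simpa using hk), Fintype.card_fin]

lemma Commute.list_prod_ofFn_right_of_adjacent {M : Type*} [Monoid M] {a : M} :
    ∀ {m : ℕ} (f : Fin (m + 1) → M) (k : Fin m),
      Commute a (f k.castSucc * f k.succ) →
      (∀ l, l ≠ k.castSucc → l ≠ k.succ → Commute a (f l)) → Commute a (List.ofFn f).prod
  | 0, _, k, _, _ => k.elim0
  | m + 1, f, k, hpair, hrest => by
    rw [List.ofFn_succ, List.prod_cons]
    induction k using Fin.cases with
    | zero =>
      rw [List.ofFn_succ, List.prod_cons, ← mul_assoc]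
      refine hpair.mul_right (Commute.list_prod_right _ _ fun b hb => ?_)
      obtain ⟨l, rfl⟩ := List.mem_ofFn.1 hb
      exact hrest _ (Fin.succ_ne_zero _) (fun h => Fin.succ_ne_zero l (Fin.succ_injective _ h))
    | succ k =>
      refine (hrest 0 (by simp [Fin.ext_iff]) (by simp [Fin.ext_iff])).mul_right
        (Commute.list_prod_ofFn_right_of_adjacent (fun l => f l.succ) k ?_ ?_)
      · rwa [Fin.succ_castSucc]
      · intro l h₁ h₂
        exact hrest _ (by rwa [← Fin.succ_castSucc, Ne, Fin.succ_inj])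
          (by rwa [Ne, Fin.succ_inj])

namespace Polynomial

lemma commute_C_X_add_C_mul_X_add_C {A : Type*} [Ring A] {s a b : A} (hab : Commute a b)
    (ha : s * a = b * s - 1) (hb : s * b = a * s + 1) :
    Commute (C s) ((X + C a) * (X + C b)) := by
  have h₁ : Commute s (a + b) := by
    rw [Commute, SemiconjBy, mul_add, ha, hb, add_mul]
    abel
  have h₂ : Commute s (a * b) := by
    rw [Commute, SemiconjBy, ← mul_assoc, ha, sub_mul, mul_assoc, hb, hab.eq]
    noncomm_ring
  have hexpand : (X + C a) * (X + C b) = X ^ 2 + C (a + b) * X + C (a * b) := by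
    rw [add_mul, mul_add, mul_add, X_mul_C, C_add, C_mul, add_mul, sq]
    abel
  rw [hexpand]
  exact (((commute_X _).symm.pow_right 2).add_right ((h₁.map C).mul_right
    (commute_X _).symm)).add_right (h₂.map C)

lemma commute_coeff_of_commute_C {A : Type*} [Semiring A] {a : A} {p : A[X]}
    (h : Commute (C a) p) (k : ℕ) : Commute a (p.coeff k) := by
  rw [Commute, SemiconjBy, ← coeff_C_mul, ← coeff_mul_C, h.eq]

end Polynomial

lemma MonoidHom.commute_apply_of_closure_eq_top {M N : Type*} [Monoid M] [Monoid N] (f : M →* N)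
    {S : Set M} (hS : Submonoid.closure S = ⊤) {y : N} (h : ∀ g ∈ S, Commute (f g) y) (g : M) :
    Commute (f g) y := by
  have hle : Submonoid.closure S ≤ (Submonoid.centralizer {y}).comap f :=
    Submonoid.closure_le.2 fun g hg =>
      Submonoid.mem_centralizer_iff.2 fun _ hz => (Set.mem_singleton_iff.1 hz) ▸ (h g hg).eq.symm
  exact (Submonoid.mem_centralizer_iff.1 (hle (hS ▸ Submonoid.mem_top g)) y rfl).symm

lemma MonoidAlgebra.coeff_conj_of_commute {k G : Type*} [Semiring k] [Group G]
    {x : MonoidAlgebra k G} {g : G} (h : Commute (of k G g) x) (a : G) :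
    x.coeff (g * a * g⁻¹) = x.coeff a := by
  have hcoeff := congrArg (fun z : MonoidAlgebra k G => z.coeff (g * a)) h.eq
  simpa [coeff_single_mul_apply, coeff_mul_single_apply] using hcoeff.symm

section JucysMurphy

open Equiv MonoidAlgebra Polynomial

lemma swap_apply_lt_iff {n : ℕ} {a b j : Fin n} (h : a < j ↔ b < j) (l : Fin n) :
    swap a b l < j ↔ l < j := by
  rw [swap_apply_def]
  split_ifs with h₁ h₂ <;> simp_all

lemma commute_of_swap_JM {n : ℕ} {a b j : Fin n} (ha : a ≠ j) (hb : b ≠ j) (h : a < j ↔ b < j) :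
    Commute (of ℤ _ (swap a b)) (JM n j) := by
  rw [Commute, SemiconjBy, JM, Finset.mul_sum, Finset.sum_mul]
  refine Finset.sum_equiv (swap a b) (fun l => by simp [swap_apply_lt_iff h]) fun l _ => ?_
  rw [← map_mul, ← map_mul, mul_swap_eq_swap_mul, swap_apply_of_ne_of_ne ha.symm hb.symm]

lemma JM_commute (n : ℕ) (p q : Fin n) : Commute (JM n p) (JM n q) := by
  wlog hpq : p < q generalizing p q
  · rcases (not_lt.1 hpq).lt_or_eq with h | rfl
    · exact (this q p h).symm
    · exact Commute.refl _
  refine Commute.sum_left _ _ _ fun k hk => ?_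
  have hkp : k < p := (Finset.mem_filter.1 hk).2
  exact commute_of_swap_JM (hkp.trans hpq).ne hpq.ne (iff_of_true (hkp.trans hpq) hpq)

section Adjacent

variable {m : ℕ} (k : Fin m)

lemma JM_succ_eq : JM (m + 1) k.succ = of ℤ _ (swap k.castSucc k.succ) +
    ∑ l ∈ Finset.univ.filter (· < k.castSucc), of ℤ _ (swap l k.succ) := by
  have hfilter : Finset.univ.filter (· < k.succ) =
      insert k.castSucc (Finset.univ.filter (· < k.castSucc)) := by
    ext l
    simp only [Finset.mem_filter, Finset.mem_univ, true_and, Finset.mem_insert, Fin.lt_def,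
      Fin.ext_iff, Fin.val_succ, Fin.val_castSucc]
    omega
  rw [JM, hfilter, Finset.sum_insert (by simp)]

lemma of_swap_mul_swap_of_lt {l : Fin (m + 1)} (hl : l < k.castSucc) (x : Fin (m + 1)) :
    of ℤ _ (swap k.castSucc k.succ) * of ℤ _ (swap l x) =
      of ℤ _ (swap l (swap k.castSucc k.succ x)) * of ℤ _ (swap k.castSucc k.succ) := by
  have hlk : l < k.succ := hl.trans Fin.castSucc_lt_succ
  rw [← map_mul, ← map_mul, mul_swap_eq_swap_mul, swap_apply_of_ne_of_ne hl.ne hlk.ne]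

lemma of_swap_mul_JM_castSucc :
    of ℤ _ (swap k.castSucc k.succ) * JM (m + 1) k.castSucc =
      JM (m + 1) k.succ * of ℤ _ (swap k.castSucc k.succ) - 1 := by
  rw [JM_succ_eq, add_mul, ← map_mul, swap_mul_self, map_one, add_sub_cancel_left, JM,
    Finset.mul_sum, Finset.sum_mul]
  refine Finset.sum_congr rfl fun l hl => ?_
  rw [of_swap_mul_swap_of_lt k (Finset.mem_filter.1 hl).2, swap_apply_left]

lemma of_swap_mul_JM_succ :
    of ℤ _ (swap k.castSucc k.succ) * JM (m + 1) k.succ =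
      JM (m + 1) k.castSucc * of ℤ _ (swap k.castSucc k.succ) + 1 := by
  rw [JM_succ_eq, mul_add, ← map_mul, swap_mul_self, map_one,
    add_comm (1 : MonoidAlgebra ℤ (Perm (Fin (m + 1)))), JM, Finset.mul_sum,
    Finset.sum_mul]
  congr 1
  refine Finset.sum_congr rfl fun l hl => ?_
  rw [of_swap_mul_swap_of_lt k (Finset.mem_filter.1 hl).2, swap_apply_right]

end Adjacent

noncomputable def jmGenPoly (n : ℕ) : (MonoidAlgebra ℤ (Perm (Fin n)))[X] :=
  (List.ofFn fun l => X + C (JM n l)).prod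

lemma commute_C_of_swap_jmGenPoly {m : ℕ} (k : Fin m) :
    Commute (C (of ℤ _ (swap k.castSucc k.succ))) (jmGenPoly (m + 1)) := by
  refine Commute.list_prod_ofFn_right_of_adjacent _ k
    (commute_C_X_add_C_mul_X_add_C (JM_commute _ _ _) (of_swap_mul_JM_castSucc k)
      (of_swap_mul_JM_succ k)) fun l h₁ h₂ => ?_
  have hlt : k.castSucc < l ↔ k.succ < l := by
    simp only [Fin.lt_def, Ne, Fin.ext_iff, Fin.val_succ, Fin.val_castSucc] at h₁ h₂ ⊢
    omega
  exact (commute_X _).symm.add_right ((commute_of_swap_JM h₁.symm h₂.symm hlt).map C)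

lemma commute_C_jmGenPoly {n : ℕ} (τ : Perm (Fin n)) :
    Commute (C (of ℤ _ τ)) (jmGenPoly n) := by
  cases n with
  | zero =>
    rw [Subsingleton.elim τ 1, map_one, map_one]
    exact Commute.one_left _
  | succ m =>
    exact ((C : _ →+* (MonoidAlgebra ℤ (Perm (Fin (m + 1))))[X]).toMonoidHom.comp
      (of ℤ _)).commute_apply_of_closure_eq_top (Perm.mclosure_swap_castSucc_succ m)
      (by rintro _ ⟨k, rfl⟩; exact commute_C_of_swap_jmGenPoly k) τ

end JucysMurphy

/-- For a symmetric polynomial `F`, the coefficient of a permutation `σ` in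
`F(J_1,…,J_n)` depends only on the conjugacy class (cycle type) of `σ`:
conjugate permutations have equal coefficients. -/
theorem coeff_symmetric_jucysMurphy_conj_invariant (n : ℕ) (F : MvPolynomial (Fin n) ℤ)
    (hF : F.IsSymmetric) (σ τ : Equiv.Perm (Fin n)) :
    coeffOf (mvEval F (JM n)) (τ * σ * τ⁻¹) = coeffOf (mvEval F (JM n)) σ := by
  obtain ⟨θ, hθX⟩ := exists_ringHom_X_eq_of_commute (JM n) (JM_commute n)
  have hθ : θ F = mvEval F (JM n) := by rw [θ.eq_mvEval, funext hθX]
  have hesymm (i : Fin n) :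
      θ (MvPolynomial.esymm (Fin n) ℤ (i + 1)) = (jmGenPoly n).coeff (n - (i + 1)) := by
    have := coeff_prod_ofFn_X_add_C θ (Nat.sub_le n (i + 1))
    simp only [hθX] at this
    rw [jmGenPoly, this, Nat.sub_sub_self i.isLt]
  have hcentral : Commute (MonoidAlgebra.of ℤ _ τ) (mvEval F (JM n)) := by
    rw [← hθ]
    refine Commute.ringHom_apply_of_isSymmetric θ hF fun i => ?_
    rw [hesymm]
    exact Polynomial.commute_coeff_of_commute_C (commute_C_jmGenPoly τ) _
  exact MonoidAlgebra.coeff_conj_of_commute hcentral σ
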